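/- arXiv:1201.4206 — 4 statements merged into one kernel-verified Lean document; each statement's English description precedes it below -/
import Mathlib

section
/- Let P be a finite set of points in ℝ^d partitioned into optimal k-means clusters O₁,…,O_k with centroids c₁,…,c_k, sizes m₁ ≥ m₂ ≥ … ≥ m_k, and average costs r_i = (∑_{p∈O_i} ‖p - c_i‖²)/m_i. If for some i < j (so m_i ≥ m_j) we have ‖c_i - c_j‖² < ε·(r_i + r_j), then the k−1 centers {c₁,…,c_k}\{c_j} satisfy Δ(P, C\{c_j}) ≤ (1+ε)·Δ(P, C), i.e., P is not (k,ε)-irreducible. -/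
open Finset

private lemma bias_var {E : Type*} [NormedAddCommGroup E] [InnerProductSpace ℝ E]
    (S : Finset E) (hS : S.Nonempty) (cen a : E)
    (hcen : cen = ((S.card : ℝ)⁻¹ • ∑ p ∈ S, p)) :
    ∑ p ∈ S, ‖p - a‖ ^ 2
      = ∑ p ∈ S, ‖p - cen‖ ^ 2 + (S.card : ℝ) * ‖cen - a‖ ^ 2 := by
  have hcard : (S.card : ℝ) ≠ 0 :=
    Nat.cast_ne_zero.mpr (card_pos.mpr hS).ne'
  have hsum : ∑ p ∈ S, (p - cen) = 0 := by
    rw [Finset.sum_sub_distrib, Finset.sum_const, hcen,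
        ← Nat.cast_smul_eq_nsmul ℝ, smul_smul,
        mul_inv_cancel₀ hcard, one_smul, sub_self]
  have key : ∀ p ∈ S, ‖p - a‖ ^ 2
      = ‖p - cen‖ ^ 2 + 2 * inner ℝ (p - cen) (cen - a) + ‖cen - a‖ ^ 2 := by
    intro p _
    have h : p - a = (p - cen) + (cen - a) := by abel
    rw [h, norm_add_sq_real]
  rw [Finset.sum_congr rfl key, Finset.sum_add_distrib, Finset.sum_add_distrib,
      Finset.sum_const, ← Finset.mul_sum, ← sum_inner, hsum, inner_zero_left,
      mul_zero, add_zero, nsmul_eq_mul]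

theorem stmt_3 {d k : ℕ} (ε : ℝ) (hε : 0 < ε)
    (P : Finset (EuclideanSpace ℝ (Fin d)))
    (O : Fin k → Finset (EuclideanSpace ℝ (Fin d)))
    (c : Fin k → EuclideanSpace ℝ (Fin d))
    (r : Fin k → ℝ)
    (hOne : ∀ l, (O l).Nonempty)
    (hdisj : ∀ l l', l ≠ l' → Disjoint (O l) (O l'))
    (hcover : ∀ p, p ∈ P ↔ ∃ l, p ∈ O l)
    (hc : ∀ l, c l = ((O l).card : ℝ)⁻¹ • ∑ p ∈ O l, p)
    (hsizes : ∀ l l' : Fin k, l ≤ l' → (O l').card ≤ (O l).card)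
    (hr : ∀ l, r l = (∑ p ∈ O l, ‖p - c l‖ ^ 2) / (O l).card)
    (hassign : ∀ l, ∀ p ∈ O l, ∀ l', ‖p - c l‖ ^ 2 ≤ ‖p - c l'‖ ^ 2)
    (i j : Fin k) (hij : i < j)
    (hclose : ‖c i - c j‖ ^ 2 < ε * (r i + r j)) :
    ∑ p ∈ P, (⨅ l : {l : Fin k // l ≠ j}, ‖p - c l.1‖ ^ 2)
      ≤ (1 + ε) * ∑ p ∈ P, ⨅ l : Fin k, ‖p - c l‖ ^ 2 := by
  classical
  haveI : Nonempty (Fin k) := ⟨i⟩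
  haveI : Nonempty {l : Fin k // l ≠ j} := ⟨⟨i, hij.ne⟩⟩
  -- cost of each cluster
  set cost : Fin k → ℝ := fun l => ∑ p ∈ O l, ‖p - c l‖ ^ 2 with hcost
  have hcostnn : ∀ l, 0 ≤ cost l := fun l =>
    Finset.sum_nonneg fun p _ => by positivity
  have hcardpos : ∀ l : Fin k, (0:ℝ) < (O l).card := fun l => by
    exact_mod_cast Nat.cast_pos.mpr (card_pos.mpr (hOne l))
  have hrnn : ∀ l, 0 ≤ r l := fun l => by
    rw [hr l]; exact div_nonneg (hcostnn l) (hcardpos l).le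
  -- decompose P
  have hP : P = Finset.univ.biUnion O := by
    ext p; simp [hcover p, Finset.mem_biUnion]
  have hpd : ((Finset.univ : Finset (Fin k)) : Set (Fin k)).PairwiseDisjoint O :=
    fun l _ l' _ h => hdisj l l' h
  have hsplit : ∀ f : EuclideanSpace ℝ (Fin d) → ℝ,
      ∑ p ∈ P, f p = ∑ l, ∑ p ∈ O l, f p := by
    intro f; rw [hP, Finset.sum_biUnion hpd]
  -- full infimum equals own-cluster cost
  have hbdd : ∀ p : EuclideanSpace ℝ (Fin d),
      BddBelow (Set.range fun l : Fin k => ‖p - c l‖ ^ 2) :=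
    fun p => (Set.finite_range _).bddBelow
  have hfull : ∑ p ∈ P, (⨅ l : Fin k, ‖p - c l‖ ^ 2) = ∑ l, cost l := by
    rw [hsplit]
    refine Finset.sum_congr rfl fun l _ => Finset.sum_congr rfl fun p hp => ?_
    exact le_antisymm (ciInf_le (hbdd p) l) (le_ciInf fun l' => hassign l p hp l')
  -- reduced infimum bounds
  have hbdd' : ∀ p : EuclideanSpace ℝ (Fin d),
      BddBelow (Set.range fun l : {l : Fin k // l ≠ j} => ‖p - c l.1‖ ^ 2) :=
    fun p => (Set.finite_range _).bddBelow
  have hA : ∀ l : Fin k, l ≠ j →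
      ∑ p ∈ O l, (⨅ l' : {l : Fin k // l ≠ j}, ‖p - c l'.1‖ ^ 2) ≤ cost l := by
    intro l hl
    exact Finset.sum_le_sum fun p _ => ciInf_le (hbdd' p) ⟨l, hl⟩
  have hAj : ∑ p ∈ O j, (⨅ l' : {l : Fin k // l ≠ j}, ‖p - c l'.1‖ ^ 2)
      ≤ cost j + ((O j).card : ℝ) * ‖c j - c i‖ ^ 2 := by
    have h1 : ∑ p ∈ O j, (⨅ l' : {l : Fin k // l ≠ j}, ‖p - c l'.1‖ ^ 2)
        ≤ ∑ p ∈ O j, ‖p - c i‖ ^ 2 :=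
      Finset.sum_le_sum fun p _ => ciInf_le (hbdd' p) ⟨i, hij.ne⟩
    rw [bias_var (O j) (hOne j) (c j) (c i) (hc j)] at h1
    exact h1
  -- extra cost bound
  have hmj : ((O j).card : ℝ) * ‖c j - c i‖ ^ 2 ≤ ε * (cost i + cost j) := by
    have h2 : ‖c j - c i‖ ^ 2 ≤ ε * (r i + r j) := by
      rw [norm_sub_rev]; exact hclose.le
    have h3 : ((O j).card : ℝ) * ‖c j - c i‖ ^ 2
        ≤ ((O j).card : ℝ) * (ε * (r i + r j)) :=
      mul_le_mul_of_nonneg_left h2 (hcardpos j).le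
    refine h3.trans ?_
    have hmjrj : ((O j).card : ℝ) * r j = cost j := by
      rw [hr j]; field_simp; rfl
    have hmjri : ((O j).card : ℝ) * r i ≤ cost i := by
      have h4 : ((O j).card : ℝ) ≤ ((O i).card : ℝ) := by
        exact_mod_cast hsizes i j hij.le
      have h5 : ((O i).card : ℝ) * r i = cost i := by
        rw [hr i]; field_simp; rfl
      calc ((O j).card : ℝ) * r i ≤ ((O i).card : ℝ) * r i :=
            mul_le_mul_of_nonneg_right h4 (hrnn i)
        _ = cost i := h5
    nlinarith [hε.le]
  -- sum of two costs ≤ total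
  have hij' : cost i + cost j ≤ ∑ l, cost l := by
    have := Finset.sum_le_sum_of_subset_of_nonneg
      (Finset.subset_univ ({i, j} : Finset (Fin k)))
      (fun l _ _ => hcostnn l)
    rwa [Finset.sum_pair hij.ne] at this
  -- put together
  rw [hsplit, hfull]
  have hdecomp : ∑ l, ∑ p ∈ O l,
      (⨅ l' : {l : Fin k // l ≠ j}, ‖p - c l'.1‖ ^ 2)
      = ∑ l ∈ Finset.univ \ {j}, (∑ p ∈ O l,
          (⨅ l' : {l : Fin k // l ≠ j}, ‖p - c l'.1‖ ^ 2))
        + ∑ p ∈ O j, (⨅ l' : {l : Fin k // l ≠ j}, ‖p - c l'.1‖ ^ 2) := by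
    rw [Finset.sum_eq_sum_sdiff_singleton_add (Finset.mem_univ j)]
  rw [hdecomp]
  have hrest : ∑ l ∈ Finset.univ \ {j}, (∑ p ∈ O l,
      (⨅ l' : {l : Fin k // l ≠ j}, ‖p - c l'.1‖ ^ 2))
      ≤ ∑ l ∈ Finset.univ \ {j}, cost l := by
    refine Finset.sum_le_sum fun l hl => hA l ?_
    simpa using (Finset.mem_sdiff.mp hl).2
  have hΔ : ∑ l ∈ Finset.univ \ {j}, cost l + cost j = ∑ l, cost l := by
    rw [← Finset.sum_eq_sum_sdiff_singleton_add (Finset.mem_univ j)]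
  nlinarith [hε.le]
end

section
/- Let O_i and O_j be two disjoint finite point sets in ℝ^d with centroids c_i, c_j, sizes m_i ≥ m_j, and average squared distances r_i, r_j to their respective centroids. If ‖c_i - c_j‖² ≤ ε·(r_i + r_j), then ∑_{p ∈ O_i ∪ O_j} ‖p - c_i‖² ≤ (1+ε)·(m_i·r_i + m_j·r_j). -/
lemma sum_sq_shift {d : ℕ} (s : Finset (EuclideanSpace ℝ (Fin d))) (hs : s.Nonempty)
    (b c : EuclideanSpace ℝ (Fin d)) (hb : b = (s.card : ℝ)⁻¹ • ∑ p ∈ s, p) :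
    ∑ p ∈ s, ‖p - c‖ ^ 2 = ∑ p ∈ s, ‖p - b‖ ^ 2 + s.card * ‖b - c‖ ^ 2 := by
  have hcard : (s.card : ℝ) ≠ 0 := by
    exact_mod_cast Finset.card_ne_zero_of_mem hs.choose_spec
  have hsum : ∑ p ∈ s, (p - b) = 0 := by
    rw [Finset.sum_sub_distrib, Finset.sum_const, hb, ← Nat.cast_smul_eq_nsmul ℝ,
      smul_smul, mul_inv_cancel₀ hcard, one_smul, sub_self]
  have key : ∀ p ∈ s, ‖p - c‖ ^ 2
      = ‖p - b‖ ^ 2 + 2 * inner ℝ (p - b) (b - c) + ‖b - c‖ ^ 2 := by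
    intro p _
    have : p - c = (p - b) + (b - c) := by abel
    rw [this, norm_add_sq_real]
  rw [Finset.sum_congr rfl key]
  rw [Finset.sum_add_distrib, Finset.sum_add_distrib, Finset.sum_const, nsmul_eq_mul]
  have : ∑ p ∈ s, inner ℝ (p - b) (b - c) = (0 : ℝ) := by
    rw [← sum_inner, hsum, inner_zero_left]
  rw [← Finset.mul_sum, this]
  ring

theorem stmt_4 {d : ℕ} (ε : ℝ) (hε : 0 < ε)
    (Oi Oj : Finset (EuclideanSpace ℝ (Fin d)))
    (hOi : Oi.Nonempty) (hOj : Oj.Nonempty)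
    (hdisj : Disjoint Oi Oj)
    (hsize : Oj.card ≤ Oi.card)
    (ci cj : EuclideanSpace ℝ (Fin d))
    (hci : ci = (Oi.card : ℝ)⁻¹ • ∑ p ∈ Oi, p)
    (hcj : cj = (Oj.card : ℝ)⁻¹ • ∑ p ∈ Oj, p)
    (ri rj : ℝ)
    (hri : ri = (∑ p ∈ Oi, ‖p - ci‖ ^ 2) / Oi.card)
    (hrj : rj = (∑ p ∈ Oj, ‖p - cj‖ ^ 2) / Oj.card)
    (hclose : ‖ci - cj‖ ^ 2 ≤ ε * (ri + rj)) :
    ∑ p ∈ Oi.disjUnion Oj hdisj, ‖p - ci‖ ^ 2 ≤ (1 + ε) * (Oi.card * ri + Oj.card * rj) := by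
  have hmi : (0 : ℝ) < Oi.card := by exact_mod_cast Finset.card_pos.mpr hOi
  have hmj : (0 : ℝ) < Oj.card := by exact_mod_cast Finset.card_pos.mpr hOj
  have hri' : ∑ p ∈ Oi, ‖p - ci‖ ^ 2 = Oi.card * ri := by
    rw [hri]; field_simp
  have hrj' : ∑ p ∈ Oj, ‖p - cj‖ ^ 2 = Oj.card * rj := by
    rw [hrj, mul_div_assoc', mul_comm, mul_div_assoc, div_self hmj.ne', mul_one]
  have hri0 : 0 ≤ ri := by
    rw [hri]; exact div_nonneg (Finset.sum_nonneg (fun p _ => sq_nonneg _)) (Nat.cast_nonneg _)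
  have hrj0 : 0 ≤ rj := by
    rw [hrj]; exact div_nonneg (Finset.sum_nonneg (fun p _ => sq_nonneg _)) (Nat.cast_nonneg _)
  have hshift : ∑ p ∈ Oj, ‖p - ci‖ ^ 2
      = Oj.card * rj + Oj.card * ‖cj - ci‖ ^ 2 := by
    rw [sum_sq_shift Oj hOj cj ci hcj, hrj']
  rw [Finset.sum_disjUnion, hri', hshift, norm_sub_rev cj ci]
  have h1 : (Oj.card : ℝ) * ‖ci - cj‖ ^ 2 ≤ Oj.card * (ε * (ri + rj)) :=
    mul_le_mul_of_nonneg_left hclose hmj.le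
  have h2 : (Oj.card : ℝ) * (ε * (ri + rj)) ≤ ε * (Oi.card * ri + Oj.card * rj) := by
    have hsz : (Oj.card : ℝ) ≤ Oi.card := by exact_mod_cast hsize
    nlinarith [mul_le_mul_of_nonneg_right hsz hri0]
  nlinarith
end

section
/- Let P be a finite set of points in ℝ^d and S a sample of M points drawn independently and uniformly at random with replacement from P. Then for any δ > 0, with probability at least 1 − δ, ∑_{p∈P} ‖p − m(S)‖² ≤ (1 + 1/(δM))·∑_{p∈P} ‖p − m(P)‖², where m(X) denotes the centroid of X. -/
open Finset

private lemma key_lemma {E : Type*} [NormedAddCommGroup E] [InnerProductSpace ℝ E]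
    {α : Type*} [Fintype α] (v : α → E) (hv : ∑ p, v p = 0) :
    ∀ M : ℕ, (Fintype.card α : ℝ) * ∑ S : Fin M → α, ‖∑ i, v (S i)‖ ^ 2
      = M * (Fintype.card α : ℝ) ^ M * ∑ p, ‖v p‖ ^ 2 := by
  intro M
  induction M with
  | zero => simp
  | succ M ih =>
    set n : ℝ := (Fintype.card α : ℝ) with hn
    have step : ∑ S : Fin (M+1) → α, ‖∑ i, v (S i)‖ ^ 2
        = n ^ M * ∑ p, ‖v p‖ ^ 2 + n * ∑ S : Fin M → α, ‖∑ i, v (S i)‖ ^ 2 := by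
      rw [← Equiv.sum_comp (Fin.consEquiv (fun _ : Fin (M+1) => α))
        (fun S => ‖∑ i, v (S i)‖ ^ 2)]
      have hcons : ∀ (x : α × (Fin M → α)),
          ∑ i, v ((Fin.consEquiv (fun _ : Fin (M+1) => α)) x i)
            = v x.1 + ∑ i : Fin M, v (x.2 i) := by
        intro x
        rw [Fin.sum_univ_succ]
        simp [Fin.consEquiv]
      rw [Fintype.sum_prod_type]
      simp only [hcons]
      have expand : ∀ (p : α) (S : Fin M → α),
          ‖v p + ∑ i : Fin M, v (S i)‖ ^ 2
            = ‖v p‖ ^ 2 + 2 * inner ℝ (v p) (∑ i : Fin M, v (S i)) + ‖∑ i : Fin M, v (S i)‖ ^ 2 :=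
        fun p S => norm_add_sq_real _ _
      simp only [expand, Finset.sum_add_distrib]
      rw [Finset.sum_comm (f := fun (p : α) (S : Fin M → α) => (2:ℝ) * inner ℝ (v p) (∑ i, v (S i)))]
      have hcross : ∑ S : Fin M → α, ∑ p : α, (2:ℝ) * inner ℝ (v p) (∑ i, v (S i)) = 0 := by
        apply Finset.sum_eq_zero
        intro S _
        rw [← Finset.mul_sum, ← sum_inner, hv]
        simp
      rw [hcross, add_zero]
      simp only [Finset.sum_const, card_univ, Fintype.card_fun, Fintype.card_fin,
        nsmul_eq_mul, Nat.cast_pow, ← hn]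
      rw [← Finset.mul_sum]
    rw [step]
    calc n * (n ^ M * ∑ p, ‖v p‖ ^ 2 + n * ∑ S : Fin M → α, ‖∑ i, v (S i)‖ ^ 2)
        = n * (n ^ M * ∑ p, ‖v p‖ ^ 2) + n * (n * ∑ S : Fin M → α, ‖∑ i, v (S i)‖ ^ 2) := by ring
      _ = n * (n ^ M * ∑ p, ‖v p‖ ^ 2) + n * (M * n ^ M * ∑ p, ‖v p‖ ^ 2) := by rw [ih]
      _ = (M + 1 : ℕ) * n ^ (M + 1) * ∑ p, ‖v p‖ ^ 2 := by push_cast; ring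

set_option maxHeartbeats 1000000 in
theorem stmt_15 {d M : ℕ} (hM : 0 < M)
    (P : Finset (EuclideanSpace ℝ (Fin d))) (hP : P.Nonempty)
    (δ : ℝ) (hδ : 0 < δ) :
    (Nat.card {S : Fin M → P //
        ∑ p ∈ P, ‖p - (M : ℝ)⁻¹ • ∑ i, (S i : EuclideanSpace ℝ (Fin d))‖ ^ 2
          ≤ (1 + 1 / (δ * M)) *
            ∑ p ∈ P, ‖p - (P.card : ℝ)⁻¹ • ∑ q ∈ P, q‖ ^ 2} : ℝ)
      / (P.card : ℝ) ^ M ≥ 1 - δ := by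
  classical
  have hncard : 0 < P.card := hP.card_pos
  have hn0 : (0 : ℝ) < (P.card : ℝ) := by exact_mod_cast hncard
  have hM0 : (0 : ℝ) < (M : ℝ) := by exact_mod_cast hM
  set n : ℝ := (P.card : ℝ) with hnn
  set c : EuclideanSpace ℝ (Fin d) := (P.card : ℝ)⁻¹ • ∑ q ∈ P, q with hc
  set V : ℝ := ∑ p ∈ P, ‖p - c‖ ^ 2 with hVdef
  have hV0 : 0 ≤ V := Finset.sum_nonneg (fun p _ => by positivity)
  -- the sum of deviations is zero
  have hsum0 : ∑ p ∈ P, (p - c) = 0 := by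
    rw [Finset.sum_sub_distrib, Finset.sum_const]
    have : (P.card) • c = ∑ q ∈ P, q := by
      rw [hc, ← Nat.cast_smul_eq_nsmul ℝ, smul_smul, mul_inv_cancel₀ (ne_of_gt hn0), one_smul]
    rw [this, sub_self]
  -- centroid identity
  have hcentroid : ∀ x : EuclideanSpace ℝ (Fin d),
      ∑ p ∈ P, ‖p - x‖ ^ 2 = V + n * ‖x - c‖ ^ 2 := by
    intro x
    have hterm : ∀ p ∈ P, ‖p - x‖ ^ 2
        = ‖p - c‖ ^ 2 + 2 * inner ℝ (p - c) (c - x) + ‖c - x‖ ^ 2 := by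
      intro p _
      have := norm_add_sq_real (p - c) (c - x)
      rwa [sub_add_sub_cancel] at this
    rw [Finset.sum_congr rfl hterm, Finset.sum_add_distrib, Finset.sum_add_distrib,
      ← Finset.mul_sum, ← sum_inner, hsum0, inner_zero_left, Finset.sum_const,
      nsmul_eq_mul, norm_sub_rev]
    rw [hVdef, hnn]
    push_cast
    ring_nf
  -- relate sample mean deviation to sum of deviations
  have hmw : ∀ S : Fin M → P,
      (M : ℝ)⁻¹ • (∑ i, (S i : EuclideanSpace ℝ (Fin d))) - c
        = (M : ℝ)⁻¹ • ∑ i, ((S i : EuclideanSpace ℝ (Fin d)) - c) := by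
    intro S
    rw [Finset.sum_sub_distrib, Finset.sum_const, Finset.card_univ, Fintype.card_fin, smul_sub]
    congr 1
    rw [← Nat.cast_smul_eq_nsmul ℝ, smul_smul, inv_mul_cancel₀ (ne_of_gt hM0), one_smul]
  -- the key expectation computation
  have hkey : n * ∑ S : Fin M → P, ‖∑ i, ((S i : EuclideanSpace ℝ (Fin d)) - c)‖ ^ 2
      = M * n ^ M * V := by
    have hv : ∑ p : {x // x ∈ P}, ((p : EuclideanSpace ℝ (Fin d)) - c) = 0 := by
      rw [Finset.sum_coe_sort P (fun p => p - c)]; exact hsum0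
    have h := key_lemma (fun p : {x // x ∈ P} => (p : EuclideanSpace ℝ (Fin d)) - c) hv M
    rw [Fintype.card_coe] at h
    rw [Finset.sum_coe_sort P (fun p => ‖p - c‖ ^ 2)] at h
    exact h
  set Q : (Fin M → P) → Prop := fun S =>
    ∑ p ∈ P, ‖p - (M : ℝ)⁻¹ • ∑ i, (S i : EuclideanSpace ℝ (Fin d))‖ ^ 2
      ≤ (1 + 1 / (δ * M)) * V with hQdef
  set B : Finset (Fin M → P) := Finset.univ.filter (fun S => ¬ Q S) with hBdef
  set G : Finset (Fin M → P) := Finset.univ.filter Q with hGdef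
  -- pointwise Markov bound on the bad set
  have hbad : ∀ S ∈ B, M * V ≤ δ * n * ‖∑ i, ((S i : EuclideanSpace ℝ (Fin d)) - c)‖ ^ 2 := by
    intro S hS
    rw [hBdef, Finset.mem_filter] at hS
    have hnot := hS.2
    rw [hQdef] at hnot
    simp only at hnot
    push_neg at hnot
    rw [hcentroid, hmw S, norm_smul] at hnot
    have h1 : (V + n * (‖(M:ℝ)⁻¹‖ * ‖∑ i, ((S i : EuclideanSpace ℝ (Fin d)) - c)‖) ^ 2)
        > (1 + 1 / (δ * M)) * V := hnot
    rw [norm_inv, Real.norm_natCast] at h1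
    have hw0 : (0:ℝ) ≤ ‖∑ i, ((S i : EuclideanSpace ℝ (Fin d)) - c)‖ ^ 2 := by positivity
    have h2 : V / (δ * M) < n * ‖∑ i, ((S i : EuclideanSpace ℝ (Fin d)) - c)‖ ^ 2 / M ^ 2 := by
      have heq : n * ((M:ℝ)⁻¹ * ‖∑ i, ((S i : EuclideanSpace ℝ (Fin d)) - c)‖) ^ 2
          = n * ‖∑ i, ((S i : EuclideanSpace ℝ (Fin d)) - c)‖ ^ 2 / M ^ 2 := by
        field_simp
      have hsplit : (1 + 1 / (δ * M)) * V - V = V / (δ * M) := by ring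
      linarith [h1, heq, hsplit]
    rw [div_lt_div_iff₀ (by positivity) (by positivity)] at h2
    nlinarith [h2, mul_pos hδ hM0]
  -- bound on the bad set cardinality
  have hB : (B.card : ℝ) ≤ δ * n ^ M := by
    rcases eq_or_lt_of_le hV0 with hVzero | hVpos
    · -- V = 0 : every sample is good, B is empty
      have hall : ∀ p ∈ P, p = c := by
        intro p hp
        have := (Finset.sum_eq_zero_iff_of_nonneg
          (fun p _ => by positivity : ∀ p ∈ P, (0:ℝ) ≤ ‖p - c‖ ^ 2)).mp hVzero.symm p hp
        have : ‖p - c‖ = 0 := by nlinarith [norm_nonneg (p - c)]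
        rwa [norm_eq_zero, sub_eq_zero] at this
      have hBempty : B = ∅ := by
        rw [hBdef, Finset.filter_eq_empty_iff]
        intro S _
        rw [hQdef]
        simp only [not_not]
        have hsz : ∀ i : Fin M, (S i : EuclideanSpace ℝ (Fin d)) - c = 0 := by
          intro i
          rw [sub_eq_zero]
          exact hall _ (S i).2
        rw [hcentroid, hmw S]
        rw [Finset.sum_congr rfl (fun i _ => hsz i), Finset.sum_const, smul_zero, smul_zero,
          norm_zero]
        rw [← hVzero]
        simp
      rw [hBempty]
      simp
      have := mul_nonneg hδ.le (pow_nonneg hn0.le M); linarith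
    · -- V > 0 : Markov
      have hsum_lb : (B.card : ℝ) * (M * V)
          ≤ ∑ S ∈ B, δ * n * ‖∑ i, ((S i : EuclideanSpace ℝ (Fin d)) - c)‖ ^ 2 := by
        calc (B.card : ℝ) * (M * V) = ∑ _S ∈ B, M * V := by rw [Finset.sum_const, nsmul_eq_mul]
          _ ≤ _ := Finset.sum_le_sum hbad
      have hsub : ∑ S ∈ B, δ * n * ‖∑ i, ((S i : EuclideanSpace ℝ (Fin d)) - c)‖ ^ 2
          ≤ δ * (M * n ^ M * V) := by
        rw [← Finset.mul_sum, ← hkey, ← mul_assoc]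
        have : ∑ S ∈ B, ‖∑ i, ((S i : EuclideanSpace ℝ (Fin d)) - c)‖ ^ 2
            ≤ ∑ S : Fin M → P, ‖∑ i, ((S i : EuclideanSpace ℝ (Fin d)) - c)‖ ^ 2 :=
          Finset.sum_le_sum_of_subset_of_nonneg (Finset.subset_univ B)
            (fun S _ _ => by positivity)
        nlinarith [this, mul_pos hδ hn0]
      have hfin : (B.card : ℝ) * (M * V) ≤ δ * (M * n ^ M * V) := le_trans hsum_lb hsub
      have := mul_pos hM0 hVpos
      nlinarith [hfin]
  -- assemble
  have hcardsplit : G.card + B.card = P.card ^ M := by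
    rw [hGdef, hBdef, Finset.card_filter_add_card_filter_not, Finset.card_univ,
      Fintype.card_fun, Fintype.card_fin, Fintype.card_coe]
  have hNat : (Nat.card {S : Fin M → P //
        ∑ p ∈ P, ‖p - (M : ℝ)⁻¹ • ∑ i, (S i : EuclideanSpace ℝ (Fin d))‖ ^ 2
          ≤ (1 + 1 / (δ * M)) * V} : ℝ) = (G.card : ℝ) := by
    have e : {S : Fin M → P //
        ∑ p ∈ P, ‖p - (M : ℝ)⁻¹ • ∑ i, (S i : EuclideanSpace ℝ (Fin d))‖ ^ 2
          ≤ (1 + 1 / (δ * M)) * V} ≃ {S // S ∈ G} :=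
      Equiv.subtypeEquivRight (fun S => by
        rw [hGdef, Finset.mem_filter]
        simp only [hQdef, Finset.mem_univ, true_and])
    rw [Nat.card_congr e, Nat.card_eq_fintype_card, Fintype.card_coe]
  rw [hNat]
  rw [ge_iff_le, le_div_iff₀ (pow_pos hn0 M)]
  have hGR : (G.card : ℝ) = n ^ M - (B.card : ℝ) := by
    have : ((G.card + B.card : ℕ) : ℝ) = ((P.card ^ M : ℕ) : ℝ) := by exact congrArg (fun k : ℕ => (k : ℝ)) hcardsplit
    push_cast at this
    rw [hnn]
    linarith
  rw [hGR]
  nlinarith [hB, pow_pos hn0 M]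
end

section
/- Suppose Δ_k denotes the optimal k-means cost of a finite point set P ⊆ ℝ^d, and suppose for every index i with 1 < i ≤ k, P is not (i, γ)-irreducible, i.e., Δ_{i-1}(P) < (1+γ)·Δ_i(P), where γ = ε/((1+ε/2)·k) and 0 < ε ≤ 1/2. Then Δ_1(P) ≤ (1+ε)·Δ_k(P). -/
/-- The optimal `k`-means cost of a finite point set `P ⊆ ℝ^d`:
the infimum over sets `C` of `k` centers of `∑_{p ∈ P} min_{c ∈ C} ‖p - c‖²`. -/
noncomputable def kMeansCost {d : ℕ} (P : Finset (EuclideanSpace ℝ (Fin d))) (k : ℕ) : ℝ :=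
  ⨅ C : {C : Finset (EuclideanSpace ℝ (Fin d)) // C.card = k},
    ∑ p ∈ P, ⨅ c : {c // c ∈ C.1}, ‖p - c.1‖ ^ 2

lemma kMeansCost_nonneg {d : ℕ} (P : Finset (EuclideanSpace ℝ (Fin d))) (k : ℕ) :
    0 ≤ kMeansCost P k := by
  apply Real.iInf_nonneg
  intro C
  apply Finset.sum_nonneg
  intro p _
  apply Real.iInf_nonneg
  intro c
  positivity

lemma aux_pow (ε γ : ℝ) (hε₀ : 0 < ε) (hγ : 0 ≤ γ) :
    ∀ n : ℕ, (n : ℝ) * γ ≤ 2 * ε / (2 + ε) →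
      (1 + γ) ^ n ≤ 1 + (n : ℝ) * γ + ((2 + ε) / 4) * ((n : ℝ) * γ) ^ 2 := by
  intro n
  induction n with
  | zero => simp
  | succ n ih =>
    intro h
    have hn : (n : ℝ) * γ ≤ 2 * ε / (2 + ε) := by
      have : (n : ℝ) ≤ (n : ℝ) + 1 := by linarith
      push_cast at h ⊢
      nlinarith
    have ih' := ih hn
    have hε2 : (0:ℝ) < 2 + ε := by linarith
    have key : (n : ℝ) * γ * (2 + ε) ≤ 2 * ε := by
      rw [le_div_iff₀ hε2] at hn; linarith
    have hpow : (1 + γ) ^ (n + 1) = (1 + γ) ^ n * (1 + γ) := pow_succ _ _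
    push_cast
    rw [hpow]
    nlinarith [sq_nonneg ((n:ℝ) * γ), sq_nonneg γ, mul_nonneg (Nat.cast_nonneg (α := ℝ) n) hγ,
      mul_nonneg (mul_nonneg (Nat.cast_nonneg (α := ℝ) n) hγ) hγ, sq_nonneg ((n:ℝ)*γ - 1)]

theorem stmt_17 {d k : ℕ} (hk : 1 ≤ k)
    (P : Finset (EuclideanSpace ℝ (Fin d))) (ε : ℝ)
    (hε₀ : 0 < ε) (hε₁ : ε ≤ 1 / 2)
    (hred : ∀ i : ℕ, 1 < i → i ≤ k →
      kMeansCost P (i - 1) < (1 + ε / ((1 + ε / 2) * k)) * kMeansCost P i) :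
    kMeansCost P 1 ≤ (1 + ε) * kMeansCost P k := by
  set γ : ℝ := ε / ((1 + ε / 2) * k) with hγdef
  have hkpos : (0:ℝ) < k := by exact_mod_cast hk
  have hden : (0:ℝ) < (1 + ε / 2) * k := by positivity
  have hγ0 : 0 < γ := div_pos hε₀ hden
  have hkγ : (k : ℝ) * γ = 2 * ε / (2 + ε) := by
    rw [hγdef]; field_simp
  -- chain of reductions
  have key : ∀ j, j ≤ k - 1 → kMeansCost P (k - j) ≤ (1 + γ) ^ j * kMeansCost P k := by
    intro j
    induction j with
    | zero => intro _; simp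
    | succ j ih =>
      intro hj
      have hj' : j ≤ k - 1 := Nat.le_of_succ_le hj
      have hjk : j + 1 ≤ k - 1 := hj
      have h2 : 1 < k - j := by omega
      have h3 : k - j ≤ k := Nat.sub_le _ _
      have hred' := hred (k - j) h2 h3
      have heq : k - j - 1 = k - (j + 1) := by omega
      rw [heq] at hred'
      calc kMeansCost P (k - (j + 1)) ≤ (1 + γ) * kMeansCost P (k - j) := le_of_lt hred'
        _ ≤ (1 + γ) * ((1 + γ) ^ j * kMeansCost P k) := by
            apply mul_le_mul_of_nonneg_left (ih hj') (by linarith)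
        _ = (1 + γ) ^ (j + 1) * kMeansCost P k := by ring
  have h1 : kMeansCost P 1 ≤ (1 + γ) ^ (k - 1) * kMeansCost P k := by
    have := key (k - 1) le_rfl
    have heq : k - (k - 1) = 1 := by omega
    rwa [heq] at this
  have hnn := kMeansCost_nonneg P k
  have hpow1 : (1 + γ) ^ (k - 1) ≤ (1 + γ) ^ k :=
    pow_le_pow_right₀ (by linarith) (Nat.sub_le _ _)
  have hpow2 : (1 + γ) ^ k ≤ 1 + ε := by
    have := aux_pow ε γ hε₀ (le_of_lt hγ0) k (le_of_eq hkγ)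
    rw [hkγ] at this
    have hε2 : (0:ℝ) < 2 + ε := by linarith
    have : (1 + γ) ^ k ≤ 1 + 2 * ε / (2 + ε) + ((2 + ε) / 4) * (2 * ε / (2 + ε)) ^ 2 := this
    have heq : 1 + 2 * ε / (2 + ε) + ((2 + ε) / 4) * (2 * ε / (2 + ε)) ^ 2 = 1 + ε := by
      field_simp; ring
    linarith [heq ▸ this]
  calc kMeansCost P 1 ≤ (1 + γ) ^ (k - 1) * kMeansCost P k := h1
    _ ≤ (1 + γ) ^ k * kMeansCost P k := mul_le_mul_of_nonneg_right hpow1 hnn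
    _ ≤ (1 + ε) * kMeansCost P k := mul_le_mul_of_nonneg_right hpow2 hnn
end
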